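/- Let A = (a₁ ≥ a₂ ≥ ⋯ ≥ a_r ≥ 1) be a partition of ℓ with r ≥ 2 parts, with blocks U₁,…,U_r of [ℓ], and let τ be any partition of ℓ. Then the number of sequences (P₁,…,P_{r−1}) of partitions satisfying P₁ ∈ S^τ_{a₁}, P_i ∈ S^{P_{i−1}}_{a_i} for 2 ≤ i ≤ r−1, and P_{r−1} = (1,1,…,1) (a_r parts equal to 1) is equal to the number of standard Young tableaux M of shape τ such that for each 1 ≤ j ≤ r, whenever j₁ < j₂ both lie in U_j, the row of M containing j₁ is strictly above the row containing j₂. -/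

import Mathlib

/-- `StepSet τ j σ` : σ is obtained from the partition (Young diagram) τ by decreasing
exactly `j` distinct parts of τ by 1; equivalently `|σ| + j = |τ|` and
`τᵢ - 1 ≤ σᵢ ≤ τᵢ` for every row `i`.  This is the set `S^τ_j` of the paper. -/
def StepSet (τ : YoungDiagram) (j : ℕ) (σ : YoungDiagram) : Prop :=
  σ.card + j = τ.card ∧ ∀ i, σ.rowLen i ≤ τ.rowLen i ∧ τ.rowLen i ≤ σ.rowLen i + 1

/-- The Young diagram is a single column `(1,1,…,1)` with `m` parts equal to 1. -/
def IsColumn (m : ℕ) (σ : YoungDiagram) : Prop :=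
  ∀ i, σ.rowLen i = if i < m then 1 else 0

/-- `T` is a standard Young tableau of shape `μ`: entries strictly increase along
rows and down columns, vanish outside `μ`, and the entries on the cells of `μ`
are exactly `1, …, μ.card`, each used exactly once. -/
def IsSYT (μ : YoungDiagram) (T : ℕ → ℕ → ℕ) : Prop :=
  (∀ i j1 j2, j1 < j2 → (i, j2) ∈ μ → T i j1 < T i j2) ∧
  (∀ i1 i2 j, i1 < i2 → (i2, j) ∈ μ → T i1 j < T i2 j) ∧
  (∀ i j, (i, j) ∉ μ → T i j = 0) ∧
  μ.cells.image (fun c => T c.1 c.2) = Finset.Icc 1 μ.card ∧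
  Set.InjOn (fun c : ℕ × ℕ => T c.1 c.2) ↑μ.cells

/-- The `j`-th (0-indexed) block of `[ℓ] = {1, …, ℓ}` determined by a partition `A`:
`Block A j = {A 0 + ⋯ + A (j-1) + 1, …, A 0 + ⋯ + A j}`. -/
def Block (A : ℕ → ℕ) (j : ℕ) : Finset ℕ :=
  Finset.Ioc (∑ i ∈ Finset.range j, A i) (∑ i ∈ Finset.range (j + 1), A i)

/-- For each block `Block A j` (`j < r`), entries of the block occur in strictly
increasing rows of the tableau `T` of shape `μ`. -/
def BlockRowCond (r : ℕ) (A : ℕ → ℕ) (μ : YoungDiagram) (T : ℕ → ℕ → ℕ) : Prop :=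
  ∀ j < r, ∀ m₁ ∈ Block A j, ∀ m₂ ∈ Block A j, m₁ < m₂ →
    ∀ c₁ ∈ μ.cells, ∀ c₂ ∈ μ.cells, T c₁.1 c₁.2 = m₁ → T c₂.1 c₂.2 = m₂ → c₁.1 < c₂.1

/-- The set `R^ℓ_{A,B}` of the paper, encoded as triples `(P, Q, τ)` where the
sequences `P` and `Q` are 0-indexed (so `P 0` is the paper's `P₁`, etc.). -/
def RSet (ℓ k r q : ℕ) (A B : ℕ → ℕ) :
    Set ((Fin (r - 1) → YoungDiagram) × (Fin (q - 1) → YoungDiagram) × YoungDiagram) :=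
  {x | x.2.2.card = ℓ ∧ x.2.2.colLen 0 ≤ k ∧ x.2.2.rowLen 0 ≤ min r q ∧
    (∀ i : Fin (r - 1), (i : ℕ) = 0 → StepSet x.2.2 (A 0) (x.1 i)) ∧
    (∀ i i' : Fin (r - 1), (i' : ℕ) = (i : ℕ) + 1 →
      StepSet (x.1 i) (A (i' : ℕ)) (x.1 i')) ∧
    (∀ i : Fin (r - 1), (i : ℕ) = r - 2 → IsColumn (A (r - 1)) (x.1 i)) ∧
    (∀ i : Fin (q - 1), (i : ℕ) = 0 → StepSet x.2.2 (B 0) (x.2.1 i)) ∧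
    (∀ i i' : Fin (q - 1), (i' : ℕ) = (i : ℕ) + 1 →
      StepSet (x.2.1 i) (B (i' : ℕ)) (x.2.1 i')) ∧
    (∀ i : Fin (q - 1), (i : ℕ) = q - 2 → IsColumn (B (q - 1)) (x.2.1 i))}

/-- The set `S^ℓ_{A,B}` of the paper: pairs `(M, N)` of standard Young tableaux of the
same shape `μ` with `ℓ` boxes, at most `k` rows, first row of length at most `min r q`,
`M` satisfying the row condition for the blocks `U_j` of `A`,
and `N` satisfying the row condition for the blocks `V_j` of `B`. -/
def SYTPairSet (ℓ k r q : ℕ) (A B : ℕ → ℕ) :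
    Set (YoungDiagram × (ℕ → ℕ → ℕ) × (ℕ → ℕ → ℕ)) :=
  {x | x.1.card = ℓ ∧ x.1.colLen 0 ≤ k ∧ x.1.rowLen 0 ≤ min r q ∧
    IsSYT x.1 x.2.1 ∧ IsSYT x.1 x.2.2 ∧
    BlockRowCond r A x.1 x.2.1 ∧ BlockRowCond q B x.1 x.2.2}

/-- The set `W^ℓ_{A,B}` of the paper: permutations `w` of `[ℓ] = {1, …, ℓ}` (extended by
the identity off `[ℓ]`) with no decreasing subsequence of length `k + 1`, such that for
`j₁ < j₂` in a common block `U_j` of `A`, `j₂` occurs in an earlier position than `j₁`,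
and for `j₁ < j₂` in a common block `V_j` of `B`, `w j₁ > w j₂`. -/
def WSet (ℓ k r q : ℕ) (A B : ℕ → ℕ) : Set (ℕ → ℕ) :=
  {w | Set.BijOn w (Set.Icc 1 ℓ) (Set.Icc 1 ℓ) ∧ (∀ m, m ∉ Set.Icc 1 ℓ → w m = m) ∧
    (∀ s : Fin (k + 1) → ℕ, StrictMono s → (∀ i, s i ∈ Set.Icc 1 ℓ) →
      ¬ StrictAnti (fun i => w (s i))) ∧
    (∀ j < r, ∀ m₁ ∈ Block A j, ∀ m₂ ∈ Block A j, m₁ < m₂ →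
      ∀ p₁ ∈ Set.Icc 1 ℓ, ∀ p₂ ∈ Set.Icc 1 ℓ, w p₁ = m₁ → w p₂ = m₂ → p₂ < p₁) ∧
    (∀ j < q, ∀ p₁ ∈ Block B j, ∀ p₂ ∈ Block B j, p₁ < p₂ → w p₂ < w p₁)}

/-!
Both sides count chains `τ ⊇ T₁ ⊇ ⋯ ⊇ T_r = ∅` of Young diagrams in which each step removes a
vertical strip (at most one cell per row) of prescribed size. The sequences `(P₁, …, P_{r-1})`
are such chains with strip sizes `a₁, …, a_r`. For a tableau `M` with the block condition, the
shapes formed by its entries `≤ a₁ + ⋯ + a_j` give such a chain with sizes `a_r, …, a₁`: the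
block condition says exactly that consecutive shapes differ by vertical strips, and `M` is
recovered by filling each strip from top to bottom.

It remains to see that the number of chains does not depend on the order of the strip sizes.
For two consecutive steps `τ ⊇ σ ⊇ ρ`, the rows with `τᵢ = ρᵢ + 1` fall into maximal runs of
rows with equal lengths, and on each run `σ` adds a cell to the rows of an initial segment.
Replacing it by the initial segment of complementary length is an involution exchanging
`|τ / σ|` and `|σ / ρ|`.
-/

open Finset

namespace YoungDiagram

theorem ext_rowLen {μ ν : YoungDiagram} (h : ∀ i, μ.rowLen i = ν.rowLen i) : μ = ν := by
  ext ⟨i, j⟩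
  simp only [mem_cells, mem_iff_lt_rowLen, h]

theorem rowLen_eq_of_forall_mem_iff {μ : YoungDiagram} {i n : ℕ}
    (h : ∀ j, (i, j) ∈ μ ↔ j < n) : μ.rowLen i = n := by
  refine le_antisymm ?_ ?_
  · by_contra! hn
    exact lt_irrefl n ((h n).1 (mem_iff_lt_rowLen.2 hn))
  · by_contra! hn
    exact lt_irrefl _ (mem_iff_lt_rowLen.1 ((h _).2 hn))

theorem rowLen_pos_iff {μ : YoungDiagram} {i : ℕ} : 0 < μ.rowLen i ↔ i < μ.colLen 0 := by
  rw [← mem_iff_lt_rowLen, mem_iff_lt_colLen]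

theorem rowLen_eq_zero_iff {μ : YoungDiagram} {i : ℕ} : μ.rowLen i = 0 ↔ μ.colLen 0 ≤ i := by
  rw [← not_lt, ← rowLen_pos_iff, Nat.pos_iff_ne_zero, not_not]

theorem rowLen_mono {μ ν : YoungDiagram} (h : μ ≤ ν) (i : ℕ) : μ.rowLen i ≤ ν.rowLen i := by
  by_contra! hlt
  exact lt_irrefl _ (mem_iff_lt_rowLen.1 (h (mem_iff_lt_rowLen.2 hlt)))

theorem colLen_zero_le_of_rowLen_le {μ ν : YoungDiagram} (h : ∀ i, μ.rowLen i ≤ ν.rowLen i) :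
    μ.colLen 0 ≤ ν.colLen 0 := by
  rw [← rowLen_eq_zero_iff]
  have := h (ν.colLen 0)
  rw [rowLen_eq_zero_iff.2 le_rfl] at this
  omega

theorem rowLen_bot (i : ℕ) : (⊥ : YoungDiagram).rowLen i = 0 :=
  rowLen_eq_of_forall_mem_iff fun _ => by simp

theorem card_bot : (⊥ : YoungDiagram).card = 0 := by
  simp [YoungDiagram.card]

theorem card_eq_sum_rowLen (μ : YoungDiagram) {n : ℕ} (h : μ.colLen 0 ≤ n) :
    μ.card = ∑ i ∈ range n, μ.rowLen i := by
  have hcells : μ.cells = (range n).biUnion μ.row := by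
    ext ⟨i, j⟩
    simp only [mem_biUnion, mem_range, mem_row_iff, mem_cells]
    refine ⟨fun hm => ⟨i, ?_, hm, rfl⟩, fun ⟨_, _, hm, _⟩ => hm⟩
    have := mem_iff_lt_colLen.1 (μ.up_left_mem le_rfl (Nat.zero_le j) hm)
    omega
  rw [YoungDiagram.card, hcells, card_biUnion]
  · exact sum_congr rfl fun i _ => (μ.rowLen_eq_card).symm
  · intro a _ b _ hab
    simp only [Function.onFun, disjoint_left, mem_row_iff]
    rintro _ ⟨_, rfl⟩ ⟨_, h2⟩
    exact hab h2

theorem card_le_of_le {μ ν : YoungDiagram} (h : μ ≤ ν) : μ.card ≤ ν.card :=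
  card_le_card (cells_subset_iff.2 h)

theorem finite_setOf_le (τ : YoungDiagram) : {σ : YoungDiagram | σ ≤ τ}.Finite := by
  refine Set.Finite.of_finite_image (f := cells) ((τ.cells.powerset.finite_toSet).subset ?_)
    fun _ _ _ _ h => YoungDiagram.ext h
  rintro _ ⟨σ, hσ, rfl⟩
  simpa using cells_subset_iff.2 hσ

open Classical in
noncomputable def filterCells (μ : YoungDiagram) (p : ℕ × ℕ → Prop) : YoungDiagram :=
  if h : IsLowerSet (↑(μ.cells.filter p) : Set (ℕ × ℕ)) then ⟨_, h⟩ else ⊥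

variable {μ : YoungDiagram} {p : ℕ × ℕ → Prop}

theorem cells_filterCells [DecidablePred p] (hp : ∀ c c', c ≤ c' → c' ∈ μ → p c' → p c) :
    (μ.filterCells p).cells = μ.cells.filter p := by
  have hlow : IsLowerSet (↑(μ.cells.filter p) : Set (ℕ × ℕ)) := by
    intro c' c hc hmem
    simp only [coe_filter, mem_cells, Set.mem_ofPred_eq] at hmem ⊢
    exact ⟨μ.isLowerSet hc hmem.1, hp c c' hc hmem.1 hmem.2⟩
  rw [filterCells, dif_pos (by convert hlow)]
  convert rfl

theorem mem_filterCells (hp : ∀ c c', c ≤ c' → c' ∈ μ → p c' → p c) {c : ℕ × ℕ} :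
    c ∈ μ.filterCells p ↔ c ∈ μ ∧ p c := by
  classical
  rw [← mem_cells, cells_filterCells hp, mem_filter, mem_cells]

theorem rowLen_filterCells_lt {f : ℕ → ℕ} (hf : Antitone f) (i : ℕ) :
    (μ.filterCells fun c => c.2 < f c.1).rowLen i = min (μ.rowLen i) (f i) := by
  refine rowLen_eq_of_forall_mem_iff fun j => ?_
  rw [mem_filterCells, mem_iff_lt_rowLen, lt_min_iff]
  intro c c' hc _ hlt
  exact lt_of_le_of_lt hc.2 (lt_of_lt_of_le hlt (hf hc.1))

end YoungDiagram

open YoungDiagram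

section StepSet

theorem StepSet.le {τ σ : YoungDiagram} {a : ℕ} (h : StepSet τ a σ) : σ ≤ τ := fun c hc =>
  mem_iff_lt_rowLen.2 ((mem_iff_lt_rowLen.1 hc).trans_le (h.2 c.1).1)

theorem finite_setOf_stepSet (τ : YoungDiagram) (a : ℕ) : {σ | StepSet τ a σ}.Finite :=
  (finite_setOf_le τ).subset fun _ h => StepSet.le h

theorem stepSet_bot_iff_isColumn {m : ℕ} {P : YoungDiagram} : StepSet P m ⊥ ↔ IsColumn m P := by
  simp only [StepSet, IsColumn, card_bot, rowLen_bot, zero_le, true_and, zero_add]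
  constructor
  · rintro ⟨hcard, hrow⟩ i
    have hsum := card_eq_sum_rowLen P le_rfl
    rw [sum_congr rfl fun i hi => le_antisymm (hrow i)
      (rowLen_pos_iff.2 (mem_range.1 hi)), sum_const, card_range, smul_eq_mul, mul_one] at hsum
    split_ifs with h
    · exact le_antisymm (hrow i) (rowLen_pos_iff.2 (by omega))
    · exact rowLen_eq_zero_iff.2 (by omega)
  · intro h
    have hcol : P.colLen 0 ≤ m := rowLen_eq_zero_iff.1 (by simpa using h m)
    refine ⟨?_, fun i => by rw [h i]; split_ifs <;> omega⟩
    rw [card_eq_sum_rowLen P hcol, sum_congr rfl fun i hi => (h i).trans (if_pos (mem_range.1 hi)),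
      sum_const, card_range, smul_eq_mul, mul_one]

def grownRows (μ ν : YoungDiagram) (n : ℕ) : Finset ℕ :=
  (range n).filter fun i => μ.rowLen i < ν.rowLen i

theorem mem_grownRows {μ ν : YoungDiagram} {n i : ℕ} :
    i ∈ grownRows μ ν n ↔ i < n ∧ μ.rowLen i < ν.rowLen i := by
  rw [grownRows, mem_filter, mem_range]

theorem grownRows_mono (μ ν : YoungDiagram) {m n : ℕ} (h : m ≤ n) :
    grownRows μ ν m ⊆ grownRows μ ν n :=
  filter_subset_filter _ (range_subset_range.2 h)

theorem card_grownRows {τ σ : YoungDiagram} {a n : ℕ} (h : StepSet τ a σ)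
    (hn : τ.colLen 0 ≤ n) : (grownRows σ τ n).card = a := by
  have hσ : σ.colLen 0 ≤ n := (colLen_zero_le_of_rowLen_le fun i => (h.2 i).1).trans hn
  have hrow : ∀ i ∈ range n, τ.rowLen i = σ.rowLen i + if σ.rowLen i < τ.rowLen i then 1 else 0 :=
    fun i _ => by have := h.2 i; split_ifs <;> omega
  have := h.1
  rw [card_eq_sum_rowLen τ hn, card_eq_sum_rowLen σ hσ, sum_congr rfl hrow, sum_add_distrib,
    ← card_filter] at this
  exact (Nat.add_left_cancel this).symm

theorem card_grownRows_le {τ σ : YoungDiagram} {a : ℕ} (h : StepSet τ a σ) (n : ℕ) :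
    (grownRows σ τ n).card ≤ a :=
  card_grownRows h (le_max_right n (τ.colLen 0)) ▸
    card_le_card (grownRows_mono σ τ (le_max_left n (τ.colLen 0)))

end StepSet

section Runs

theorem exists_runStart (L : ℕ → Prop) (i : ℕ) : ∃ j, j ≤ i ∧ ∀ m, j ≤ m → m < i → L m :=
  ⟨i, le_rfl, fun _ h₁ h₂ => absurd h₂ (by omega)⟩

variable {L : ℕ → Prop} [DecidablePred L] (hL : ∀ i, ∃ j, i ≤ j ∧ ¬L j)

/-- Reading `L m` as "rows `m` and `m + 1` are linked", `[runStart L i, runEnd hL i]` is the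
maximal interval around `i` whose consecutive rows are all linked. -/
def runStart (L : ℕ → Prop) [DecidablePred L] (i : ℕ) : ℕ := Nat.find (exists_runStart L i)

def runEnd (i : ℕ) : ℕ := Nat.find (hL i)

def runMirror (i : ℕ) : ℕ := runStart L i + runEnd hL i - i

theorem runStart_le (i : ℕ) : runStart L i ≤ i := (Nat.find_spec (exists_runStart L i)).1

theorem runStart_spec {i m : ℕ} (h₁ : runStart L i ≤ m) (h₂ : m < i) : L m :=
  (Nat.find_spec (exists_runStart L i)).2 m h₁ h₂

theorem le_runEnd (i : ℕ) : i ≤ runEnd hL i := (Nat.find_spec (hL i)).1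

theorem not_runEnd (i : ℕ) : ¬L (runEnd hL i) := (Nat.find_spec (hL i)).2

theorem of_runStart_le_of_lt_runEnd {i m : ℕ} (h₁ : runStart L i ≤ m) (h₂ : m < runEnd hL i) :
    L m := by
  rcases lt_or_ge m i with h | h
  · exact runStart_spec h₁ h
  · by_contra hm
    exact Nat.find_min (hL i) h₂ ⟨h, hm⟩

theorem not_runStart_sub_one {i : ℕ} (h : 0 < runStart L i) : ¬L (runStart L i - 1) := by
  intro hl
  have := runStart_le (L := L) i
  refine Nat.find_min (exists_runStart L i) (show runStart L i - 1 < runStart L i by omega)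
    ⟨by omega, fun m hm₁ hm₂ => ?_⟩
  rcases eq_or_lt_of_le hm₁ with rfl | hm
  · exact hl
  · exact runStart_spec (by omega) hm₂

theorem runStart_eq_runStart {i j : ℕ} (h₁ : runStart L i ≤ j) (h₂ : j ≤ runEnd hL i) :
    runStart L j = runStart L i := by
  have := runStart_le (L := L) j
  refine le_antisymm (Nat.find_min' (exists_runStart L j) ⟨h₁, fun m hm₁ hm₂ =>
    of_runStart_le_of_lt_runEnd hL hm₁ (by omega)⟩) ?_
  by_contra! hlt
  have hpos : 0 < runStart L i := by omega
  exact not_runStart_sub_one hpos (runStart_spec (i := j) (by omega) (by omega))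

theorem runEnd_eq_runEnd {i j : ℕ} (h₁ : runStart L i ≤ j) (h₂ : j ≤ runEnd hL i) :
    runEnd hL j = runEnd hL i := by
  refine le_antisymm (Nat.find_min' _ ⟨h₂, not_runEnd hL i⟩) ?_
  by_contra! hlt
  exact not_runEnd hL j (of_runStart_le_of_lt_runEnd hL (h₁.trans (le_runEnd hL j)) hlt)

theorem runMirror_mem (i : ℕ) :
    runStart L i ≤ runMirror hL i ∧ runMirror hL i ≤ runEnd hL i := by
  have := runStart_le (L := L) i
  have := le_runEnd hL i
  unfold runMirror
  omega

theorem runMirror_runMirror (i : ℕ) : runMirror hL (runMirror hL i) = i := by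
  obtain ⟨h₁, h₂⟩ := runMirror_mem hL i
  have := runStart_le (L := L) i
  have := le_runEnd hL i
  have := runStart_eq_runStart hL h₁ h₂
  have := runEnd_eq_runEnd hL h₁ h₂
  unfold runMirror at *
  omega

theorem runMirror_succ {m : ℕ} (hm : L m) : runMirror hL (m + 1) + 1 = runMirror hL m := by
  have hend : m + 1 ≤ runEnd hL m :=
    lt_of_le_of_ne (le_runEnd hL m) fun h => not_runEnd hL m (h ▸ hm)
  have := runStart_le (L := L) m
  have hs := runStart_eq_runStart hL (i := m) (j := m + 1) (by omega) hend
  have he := runEnd_eq_runEnd hL (i := m) (j := m + 1) (by omega) hend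
  unfold runMirror
  omega

theorem apply_runMirror {β : Type*} {f : ℕ → β} (hf : ∀ m, L m → f (m + 1) = f m) (i : ℕ) :
    f (runMirror hL i) = f i := by
  have key : ∀ j k, runStart L i ≤ j → j ≤ k → k ≤ runEnd hL i → f k = f j := by
    intro j k hj hjk hk
    induction k, hjk using Nat.le_induction with
    | base => rfl
    | succ k hk' ih => rw [hf k (of_runStart_le_of_lt_runEnd hL (i := i) (by omega) (by omega)),
        ih (by omega)]
  obtain ⟨h₁, h₂⟩ := runMirror_mem hL i
  have := runStart_le (L := L) i
  rcases le_total i (runMirror hL i) with h | h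
  · exact key i _ this h h₂
  · exact (key _ i h₁ h (le_runEnd hL i)).symm

end Runs

section StripSwap

open Classical

variable (τ ρ : YoungDiagram)

def IsLinkedRow (i : ℕ) : Prop :=
  τ.rowLen i = ρ.rowLen i + 1 ∧ ρ.rowLen (i + 1) = ρ.rowLen i ∧ τ.rowLen (i + 1) = τ.rowLen i

theorem exists_not_isLinkedRow (i : ℕ) : ∃ j, i ≤ j ∧ ¬IsLinkedRow τ ρ j := by
  refine ⟨max i (τ.colLen 0), le_max_left _ _, fun h => ?_⟩
  have := rowLen_eq_zero_iff.2 (le_max_right i (τ.colLen 0))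
  have := h.1
  omega

noncomputable def rowMirror : ℕ → ℕ := runMirror (exists_not_isLinkedRow τ ρ)

/-- On a maximal run of rows where `ρᵢ` and `τᵢ = ρᵢ + 1` are constant, a diagram `σ` squeezed
between `ρ` and `τ` adds a cell to the rows of an initial segment of the run; the swap adds a
cell to the rows of the initial segment of complementary length. On the other rows `σ` is
forced, and left unchanged. -/
noncomputable def swapRowLen (σ : YoungDiagram) (i : ℕ) : ℕ :=
  ρ.rowLen i + τ.rowLen i - σ.rowLen (rowMirror τ ρ i)

noncomputable def stripSwap (σ : YoungDiagram) : YoungDiagram :=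
  τ.filterCells fun c => c.2 < swapRowLen τ ρ σ c.1

def IsStripBetween (σ : YoungDiagram) : Prop :=
  ∀ i, ρ.rowLen i ≤ σ.rowLen i ∧ σ.rowLen i ≤ ρ.rowLen i + 1 ∧
    σ.rowLen i ≤ τ.rowLen i ∧ τ.rowLen i ≤ σ.rowLen i + 1

variable {τ ρ}

theorem rowLen_rowMirror_left (i : ℕ) : τ.rowLen (rowMirror τ ρ i) = τ.rowLen i :=
  apply_runMirror _ (fun _ hm => hm.2.2) i

theorem rowLen_rowMirror_right (i : ℕ) : ρ.rowLen (rowMirror τ ρ i) = ρ.rowLen i :=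
  apply_runMirror _ (fun _ hm => hm.2.1) i

theorem rowMirror_rowMirror (i : ℕ) : rowMirror τ ρ (rowMirror τ ρ i) = i :=
  runMirror_runMirror _ i

theorem IsStripBetween.rowMirror_bounds {σ : YoungDiagram} (hσ : IsStripBetween τ ρ σ) (i : ℕ) :
    ρ.rowLen i ≤ σ.rowLen (rowMirror τ ρ i) ∧ σ.rowLen (rowMirror τ ρ i) ≤ ρ.rowLen i + 1 ∧
      σ.rowLen (rowMirror τ ρ i) ≤ τ.rowLen i ∧ τ.rowLen i ≤ σ.rowLen (rowMirror τ ρ i) + 1 := by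
  simpa only [rowLen_rowMirror_left, rowLen_rowMirror_right] using hσ (rowMirror τ ρ i)

theorem isStripBetween_swapRowLen {σ : YoungDiagram} (hσ : IsStripBetween τ ρ σ) (i : ℕ) :
    ρ.rowLen i ≤ swapRowLen τ ρ σ i ∧ swapRowLen τ ρ σ i ≤ ρ.rowLen i + 1 ∧
      swapRowLen τ ρ σ i ≤ τ.rowLen i ∧ τ.rowLen i ≤ swapRowLen τ ρ σ i + 1 := by
  have := hσ.rowMirror_bounds i
  unfold swapRowLen
  omega

theorem antitone_swapRowLen {σ : YoungDiagram} (hσ : IsStripBetween τ ρ σ) :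
    Antitone (swapRowLen τ ρ σ) := by
  refine antitone_nat_of_succ_le fun m => ?_
  by_cases hl : IsLinkedRow τ ρ m
  · have hm := runMirror_succ (exists_not_isLinkedRow τ ρ) hl
    have := σ.rowLen_anti (rowMirror τ ρ (m + 1)) (rowMirror τ ρ m) (by rw [rowMirror]; omega)
    unfold swapRowLen
    rw [hl.2.1, hl.2.2]
    omega
  · have := isStripBetween_swapRowLen hσ m
    have := isStripBetween_swapRowLen hσ (m + 1)
    have := τ.rowLen_anti m (m + 1) m.le_succ
    have := ρ.rowLen_anti m (m + 1) m.le_succ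
    unfold IsLinkedRow at hl
    omega

theorem rowLen_stripSwap {σ : YoungDiagram} (hσ : IsStripBetween τ ρ σ) (i : ℕ) :
    (stripSwap τ ρ σ).rowLen i = swapRowLen τ ρ σ i := by
  rw [stripSwap, rowLen_filterCells_lt (antitone_swapRowLen hσ)]
  exact min_eq_right (isStripBetween_swapRowLen hσ i).2.2.1

theorem isStripBetween_stripSwap {σ : YoungDiagram} (hσ : IsStripBetween τ ρ σ) :
    IsStripBetween τ ρ (stripSwap τ ρ σ) := fun i => by
  rw [rowLen_stripSwap hσ]
  exact isStripBetween_swapRowLen hσ i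

theorem stripSwap_stripSwap {σ : YoungDiagram} (hσ : IsStripBetween τ ρ σ) :
    stripSwap τ ρ (stripSwap τ ρ σ) = σ := by
  refine ext_rowLen fun i => ?_
  rw [rowLen_stripSwap (isStripBetween_stripSwap hσ), swapRowLen, rowLen_stripSwap hσ,
    swapRowLen, rowMirror_rowMirror, rowLen_rowMirror_left, rowLen_rowMirror_right]
  have := hσ i
  omega

theorem rowMirror_lt_colLen {i : ℕ} (hi : i < τ.colLen 0) : rowMirror τ ρ i < τ.colLen 0 := by
  rw [← rowLen_pos_iff, rowLen_rowMirror_left]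
  exact rowLen_pos_iff.2 hi

theorem card_stripSwap_add_card {σ : YoungDiagram} (hσ : IsStripBetween τ ρ σ) :
    (stripSwap τ ρ σ).card + σ.card = ρ.card + τ.card := by
  set N := τ.colLen 0
  have hcard : ∀ μ : YoungDiagram, (∀ i, μ.rowLen i ≤ τ.rowLen i) →
      μ.card = ∑ i ∈ range N, μ.rowLen i :=
    fun μ hμ => card_eq_sum_rowLen μ (colLen_zero_le_of_rowLen_le hμ)
  have hmaps : ∀ i ∈ range N, rowMirror τ ρ i ∈ range N := fun i hi =>
    mem_range.2 (rowMirror_lt_colLen (mem_range.1 hi))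
  have hσ' : ∑ i ∈ range N, σ.rowLen (rowMirror τ ρ i) = ∑ i ∈ range N, σ.rowLen i :=
    sum_nbij' _ _ hmaps hmaps (fun i _ => rowMirror_rowMirror i) (fun i _ => rowMirror_rowMirror i)
      fun _ _ => rfl
  rw [hcard _ fun i => (isStripBetween_stripSwap hσ i).2.2.1, hcard σ fun i => (hσ i).2.2.1,
    hcard ρ fun i => by have := hσ i; omega, hcard τ fun _ => le_rfl, ← hσ', ← sum_add_distrib,
    ← sum_add_distrib]
  refine sum_congr rfl fun i _ => ?_
  rw [rowLen_stripSwap hσ, swapRowLen]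
  have := hσ.rowMirror_bounds i
  omega

theorem ncard_stepSet_stepSet_comm (τ ρ : YoungDiagram) (a b : ℕ) :
    {σ | StepSet τ a σ ∧ StepSet σ b ρ}.ncard = {σ | StepSet τ b σ ∧ StepSet σ a ρ}.ncard := by
  have between : ∀ {x y σ}, StepSet τ x σ ∧ StepSet σ y ρ → IsStripBetween τ ρ σ :=
    fun ⟨⟨_, h₁⟩, ⟨_, h₂⟩⟩ i => ⟨(h₂ i).1, (h₂ i).2, (h₁ i).1, (h₁ i).2⟩
  have maps : ∀ x y, Set.MapsTo (stripSwap τ ρ)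
      {σ | StepSet τ x σ ∧ StepSet σ y ρ} {σ | StepSet τ y σ ∧ StepSet σ x ρ} := by
    rintro x y σ hσ
    have hcard := card_stripSwap_add_card (between hσ)
    have hb := isStripBetween_stripSwap (between hσ)
    exact ⟨⟨by have := hσ.1.1; have := hσ.2.1; omega, fun i => ⟨(hb i).2.2.1, (hb i).2.2.2⟩⟩,
      ⟨by have := hσ.1.1; have := hσ.2.1; omega, fun i => ⟨(hb i).1, (hb i).2.1⟩⟩⟩
  refine Set.ncard_congr (fun σ _ => stripSwap τ ρ σ) (fun σ hσ => maps a b hσ)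
    (fun σ₁ σ₂ h₁ h₂ h => ?_) fun σ hσ => ⟨_, maps b a hσ, stripSwap_stripSwap (between hσ)⟩
  rw [← stripSwap_stripSwap (between h₁), h, stripSwap_stripSwap (between h₂)]

end StripSwap

section StripChains

def IsStripChain : List ℕ → YoungDiagram → List YoungDiagram → Prop
  | [], τ, [] => τ = ⊥
  | a :: L, τ, σ :: S => StepSet τ a σ ∧ IsStripChain L σ S
  | _, _, _ => False

theorem isStripChain_cons_iff {a : ℕ} {L : List ℕ} {τ : YoungDiagram} {S : List YoungDiagram} :
    IsStripChain (a :: L) τ S ↔ ∃ σ T, S = σ :: T ∧ StepSet τ a σ ∧ IsStripChain L σ T := by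
  cases S with
  | nil => simp [IsStripChain]
  | cons σ T => simp [IsStripChain]

theorem isStripChain_cons_cons_iff {a b : ℕ} {L : List ℕ} {τ : YoungDiagram}
    {S : List YoungDiagram} : IsStripChain (a :: b :: L) τ S ↔
      ∃ σ ρ T, S = σ :: ρ :: T ∧ StepSet τ a σ ∧ StepSet σ b ρ ∧ IsStripChain L ρ T := by
  simp only [isStripChain_cons_iff]
  aesop

theorem finite_setOf_isStripChain (L : List ℕ) (τ : YoungDiagram) :
    {S | IsStripChain L τ S}.Finite := by
  induction L generalizing τ with
  | nil =>
    refine (Set.finite_singleton []).subset fun S hS => ?_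
    cases S with
    | nil => rfl
    | cons => exact hS.elim
  | cons a L ih =>
    refine ((finite_setOf_stepSet τ a).biUnion fun σ _ => (ih σ).image (σ :: ·)).subset ?_
    intro S hS
    obtain ⟨σ, T, rfl, hσ, hT⟩ := isStripChain_cons_iff.1 hS
    exact Set.mem_biUnion hσ ⟨T, hT, rfl⟩

theorem exists_bijOn_of_ncard_eq {α β : Type*} [Nonempty β] {s : Set α} {t : Set β}
    (hs : s.Finite) (ht : t.Finite) (h : s.ncard = t.ncard) : ∃ f, Set.BijOn f s t :=
  hs.exists_bijOn_of_encard_eq (by rw [← hs.cast_ncard_eq, ← ht.cast_ncard_eq, h])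

theorem ncard_isStripChain_cons_congr (a : ℕ) {L L' : List ℕ}
    (h : ∀ σ, {S | IsStripChain L σ S}.ncard = {S | IsStripChain L' σ S}.ncard)
    (τ : YoungDiagram) :
    {S | IsStripChain (a :: L) τ S}.ncard = {S | IsStripChain (a :: L') τ S}.ncard := by
  choose g hg using fun σ => exists_bijOn_of_ncard_eq (finite_setOf_isStripChain L σ)
    (finite_setOf_isStripChain L' σ) (h σ)
  let f : List YoungDiagram → List YoungDiagram
    | [] => []
    | σ :: T => σ :: g σ T
  refine Set.ncard_congr (fun S _ => f S) (fun S hS => ?_) (fun S₁ S₂ hS₁ hS₂ heq => ?_)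
    fun S hS => ?_
  · obtain ⟨σ, T, rfl, hσ, hT⟩ := isStripChain_cons_iff.1 hS
    exact ⟨hσ, (hg σ).mapsTo hT⟩
  · obtain ⟨σ₁, T₁, rfl, -, hT₁⟩ := isStripChain_cons_iff.1 hS₁
    obtain ⟨σ₂, T₂, rfl, -, hT₂⟩ := isStripChain_cons_iff.1 hS₂
    obtain ⟨rfl, heq⟩ := List.cons_eq_cons.1 heq
    rw [(hg σ₁).injOn hT₁ hT₂ heq]
  · obtain ⟨σ, T', rfl, hσ, hT'⟩ := isStripChain_cons_iff.1 hS
    obtain ⟨T, hT, rfl⟩ := (hg σ).surjOn hT'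
    exact ⟨σ :: T, ⟨hσ, hT⟩, rfl⟩

theorem ncard_isStripChain_swap (x y : ℕ) (L : List ℕ) (τ : YoungDiagram) :
    {S | IsStripChain (x :: y :: L) τ S}.ncard = {S | IsStripChain (y :: x :: L) τ S}.ncard := by
  have hfin : ∀ u v ρ, {σ | StepSet τ u σ ∧ StepSet σ v ρ}.Finite := fun u v _ =>
    (finite_setOf_stepSet τ u).subset fun _ hσ => hσ.1
  choose g hg using fun ρ => exists_bijOn_of_ncard_eq (hfin x y ρ) (hfin y x ρ)
    (ncard_stepSet_stepSet_comm τ ρ x y)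
  let f : List YoungDiagram → List YoungDiagram
    | σ :: ρ :: T => g ρ σ :: ρ :: T
    | S => S
  refine Set.ncard_congr (fun S _ => f S) (fun S hS => ?_) (fun S₁ S₂ hS₁ hS₂ heq => ?_)
    fun S hS => ?_
  · obtain ⟨σ, ρ, T, rfl, hσ, hρ, hT⟩ := isStripChain_cons_cons_iff.1 hS
    have := (hg ρ).mapsTo ⟨hσ, hρ⟩
    exact ⟨this.1, this.2, hT⟩
  · obtain ⟨σ₁, ρ₁, T₁, rfl, hσ₁, hρ₁, -⟩ := isStripChain_cons_cons_iff.1 hS₁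
    obtain ⟨σ₂, ρ₂, T₂, rfl, hσ₂, hρ₂, -⟩ := isStripChain_cons_cons_iff.1 hS₂
    simp only [f, List.cons.injEq] at heq
    obtain ⟨heq, rfl, rfl⟩ := heq
    rw [(hg ρ₁).injOn ⟨hσ₁, hρ₁⟩ ⟨hσ₂, hρ₂⟩ heq]
  · obtain ⟨σ', ρ, T, rfl, hσ', hρ, hT⟩ := isStripChain_cons_cons_iff.1 hS
    obtain ⟨σ, hσ, rfl⟩ := (hg ρ).surjOn ⟨hσ', hρ⟩
    exact ⟨σ :: ρ :: T, ⟨hσ.1, hσ.2, hT⟩, rfl⟩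

theorem ncard_isStripChain_perm {L L' : List ℕ} (h : L.Perm L') (τ : YoungDiagram) :
    {S | IsStripChain L τ S}.ncard = {S | IsStripChain L' τ S}.ncard := by
  induction h generalizing τ with
  | nil => rfl
  | cons a _ ih => exact ncard_isStripChain_cons_congr a ih τ
  | swap x y L => exact ncard_isStripChain_swap y x L τ
  | trans _ _ ih₁ ih₂ => rw [ih₁, ih₂]

theorem isStripChain_map_range_iff (n : ℕ) (a : ℕ → ℕ) (U : ℕ → YoungDiagram) :
    IsStripChain ((List.range n).map a) (U 0) ((List.range n).map fun k => U (k + 1)) ↔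
      (∀ k < n, StepSet (U k) (a k) (U (k + 1))) ∧ U n = ⊥ := by
  induction n generalizing a U with
  | zero => simp [IsStripChain]
  | succ n ih =>
    simp only [List.range_succ_eq_map, List.map_cons, List.map_map]
    refine (Iff.rfl.and (ih (a ∘ Nat.succ) fun k => U (k + 1))).trans ?_
    simp only [Function.comp_apply, Nat.forall_lt_succ_left]
    tauto

theorem IsStripChain.length_eq {L : List ℕ} {τ : YoungDiagram} {S : List YoungDiagram}
    (h : IsStripChain L τ S) : S.length = L.length := by
  induction L generalizing τ S with
  | nil => cases S with
    | nil => rfl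
    | cons => exact h.elim
  | cons a L ih =>
    obtain ⟨σ, T, rfl, -, hT⟩ := isStripChain_cons_iff.1 h
    simp [ih hT]

theorem List.map_range_getD {α : Type*} (S : List α) (d : α) :
    (List.range S.length).map (fun k => S.getD k d) = S :=
  List.ext_getElem (by simp) fun k _ hk => by simp [List.getElem?_eq_getElem hk]

theorem isStripChain_iff_getD {n : ℕ} {a : ℕ → ℕ} {τ : YoungDiagram} {S : List YoungDiagram}
    (hS : S.length = n) :
    IsStripChain ((List.range n).map a) τ S ↔
      (∀ k < n, StepSet ((τ :: S).getD k ⊥) (a k) (S.getD k ⊥)) ∧ (τ :: S).getD n ⊥ = ⊥ := by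
  subst hS
  have h := isStripChain_map_range_iff S.length a fun k => (τ :: S).getD k ⊥
  simp only [List.getD_cons_zero, List.getD_cons_succ, List.map_range_getD] at h
  exact h

end StripChains

section Tableaux

def partialSum (A : ℕ → ℕ) (j : ℕ) : ℕ := ∑ i ∈ range j, A i

theorem partialSum_mono (A : ℕ → ℕ) : Monotone (partialSum A) := fun _ _ h =>
  sum_le_sum_of_subset (range_subset_range.2 h)

theorem partialSum_succ (A : ℕ → ℕ) (j : ℕ) : partialSum A (j + 1) = partialSum A j + A j :=
  sum_range_succ A j

theorem mem_block_iff {A : ℕ → ℕ} {j v : ℕ} :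
    v ∈ Block A j ↔ partialSum A j < v ∧ v ≤ partialSum A (j + 1) := mem_Ioc

variable {τ : YoungDiagram} {M : ℕ → ℕ → ℕ}

namespace IsSYT

theorem le_of_le (hM : IsSYT τ M) {i₁ j₁ i₂ j₂ : ℕ} (hi : i₁ ≤ i₂) (hj : j₁ ≤ j₂)
    (hmem : (i₂, j₂) ∈ τ) : M i₁ j₁ ≤ M i₂ j₂ := by
  have hrow : M i₁ j₁ ≤ M i₁ j₂ := by
    rcases hj.eq_or_lt with rfl | hlt
    · exact le_rfl
    · exact (hM.1 i₁ j₁ j₂ hlt (τ.up_left_mem hi le_rfl hmem)).le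
  rcases hi.eq_or_lt with rfl | hlt
  · exact hrow
  · exact hrow.trans (hM.2.1 i₁ i₂ j₂ hlt hmem).le

theorem mem_Icc_card (hM : IsSYT τ M) {c : ℕ × ℕ} (hc : c ∈ τ) : M c.1 c.2 ∈ Icc 1 τ.card := by
  rw [← hM.2.2.2.1]
  exact mem_image_of_mem _ ((mem_cells c).2 hc)

theorem card_filter_mem_Ioc (hM : IsSYT τ M) {u v : ℕ} (hv : v ≤ τ.card) :
    (τ.cells.filter fun c => M c.1 c.2 ∈ Ioc u v).card = v - u := by
  have himage : (τ.cells.filter fun c => M c.1 c.2 ∈ Ioc u v).image (fun c => M c.1 c.2) =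
      Ioc u v := by
    ext w
    have hw := Finset.ext_iff.1 hM.2.2.2.1 w
    simp only [mem_image, mem_filter, Finset.mem_Icc, mem_Ioc] at hw ⊢
    constructor
    · rintro ⟨c, ⟨-, h⟩, rfl⟩
      exact h
    · intro h
      obtain ⟨c, hc, rfl⟩ := hw.2 ⟨by omega, by omega⟩
      exact ⟨c, ⟨hc, h⟩, rfl⟩
  have := card_image_of_injOn (s := τ.cells.filter fun c => M c.1 c.2 ∈ Ioc u v)
    (hM.2.2.2.2.mono fun c hc => (mem_filter.1 hc).1)
  rwa [himage, Nat.card_Ioc, eq_comm] at this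

end IsSYT

noncomputable def shapeLE (τ : YoungDiagram) (M : ℕ → ℕ → ℕ) (m : ℕ) : YoungDiagram :=
  τ.filterCells fun c => M c.1 c.2 ≤ m

theorem IsSYT.apply_le_of_le (hM : IsSYT τ M) (m : ℕ) :
    ∀ c c' : ℕ × ℕ, c ≤ c' → c' ∈ τ → M c'.1 c'.2 ≤ m → M c.1 c.2 ≤ m :=
  fun _ _ hc hmem hle => (hM.le_of_le hc.1 hc.2 hmem).trans hle

theorem mem_shapeLE (hM : IsSYT τ M) {m : ℕ} {c : ℕ × ℕ} :
    c ∈ shapeLE τ M m ↔ c ∈ τ ∧ M c.1 c.2 ≤ m :=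
  mem_filterCells (hM.apply_le_of_le m)

theorem card_shapeLE (hM : IsSYT τ M) {m : ℕ} (hm : m ≤ τ.card) : (shapeLE τ M m).card = m := by
  classical
  rw [YoungDiagram.card, shapeLE, cells_filterCells (hM.apply_le_of_le m)]
  refine Eq.trans (congrArg _ (filter_congr fun c hc => ?_)) (hM.card_filter_mem_Ioc (u := 0) hm)
  have := (mem_Icc.1 (hM.mem_Icc_card ((mem_cells c).1 hc))).1
  simp only [mem_Ioc]
  omega

theorem shapeLE_of_card_le (hM : IsSYT τ M) {m : ℕ} (hm : τ.card ≤ m) : shapeLE τ M m = τ := by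
  ext c
  simp only [mem_cells, mem_shapeLE hM, and_iff_left_iff_imp]
  exact fun hc => (mem_Icc.1 (hM.mem_Icc_card hc)).2.trans hm

theorem shapeLE_zero (hM : IsSYT τ M) : shapeLE τ M 0 = ⊥ := by
  ext c
  simp only [mem_cells, mem_shapeLE hM, cells_bot, notMem_empty, iff_false, not_and]
  exact fun hc => by have := (mem_Icc.1 (hM.mem_Icc_card hc)).1; omega

theorem shapeLE_mono (hM : IsSYT τ M) {m₁ m₂ : ℕ} (h : m₁ ≤ m₂) :
    shapeLE τ M m₁ ≤ shapeLE τ M m₂ := fun c hc => by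
  rw [mem_shapeLE hM] at hc ⊢
  exact ⟨hc.1, hc.2.trans h⟩

variable {r : ℕ} {A : ℕ → ℕ}

theorem BlockRowCond.fst_lt (hBRC : BlockRowCond r A τ M) {k : ℕ} (hk : k < r) {c₁ c₂ : ℕ × ℕ}
    (hc₁ : c₁ ∈ τ) (hc₂ : c₂ ∈ τ) (hv₁ : M c₁.1 c₁.2 ∈ Block A k) (hv₂ : M c₂.1 c₂.2 ∈ Block A k)
    (hlt : M c₁.1 c₁.2 < M c₂.1 c₂.2) : c₁.1 < c₂.1 :=
  hBRC k hk _ hv₁ _ hv₂ hlt c₁ ((mem_cells _).2 hc₁) c₂ ((mem_cells _).2 hc₂) rfl rfl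

/-- Two cells of the same row cannot both carry entries of one block, so the shapes cut out
by consecutive partial sums differ by a vertical strip. -/
theorem rowLen_shapeLE_succ_le (hM : IsSYT τ M) (hBRC : BlockRowCond r A τ M) {k : ℕ}
    (hk : k < r) (i : ℕ) :
    (shapeLE τ M (partialSum A (k + 1))).rowLen i ≤
      (shapeLE τ M (partialSum A k)).rowLen i + 1 := by
  set j := (shapeLE τ M (partialSum A k)).rowLen i
  by_contra! hcon
  have hin : ∀ d ≤ 1, (i, j + d) ∈ τ ∧ M i (j + d) ∈ Block A k := fun d hd => by
    have h₁ := (mem_shapeLE hM).1 (mem_iff_lt_rowLen.2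
      (show j + d < (shapeLE τ M (partialSum A (k + 1))).rowLen i by omega))
    have h₂ : (i, j + d) ∉ shapeLE τ M (partialSum A k) := by
      rw [mem_iff_lt_rowLen]; omega
    rw [mem_shapeLE hM, not_and, not_le] at h₂
    exact ⟨h₁.1, mem_block_iff.2 ⟨h₂ h₁.1, h₁.2⟩⟩
  have := hBRC.fst_lt hk (hin 0 zero_le_one).1 (hin 1 le_rfl).1 (hin 0 zero_le_one).2
    (hin 1 le_rfl).2 (hM.1 i (j + 0) (j + 1) (by omega) (hin 1 le_rfl).1)
  exact lt_irrefl i this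

theorem stepSet_shapeLE (hM : IsSYT τ M) (hBRC : BlockRowCond r A τ M)
    (hsum : partialSum A r = τ.card) {k : ℕ} (hk : k < r) :
    StepSet (shapeLE τ M (partialSum A (k + 1))) (A k) (shapeLE τ M (partialSum A k)) := by
  have h₁ : partialSum A (k + 1) ≤ τ.card := hsum ▸ partialSum_mono A hk
  have h₀ : partialSum A k ≤ τ.card := (partialSum_mono A k.le_succ).trans h₁
  refine ⟨?_, fun i => ⟨?_, rowLen_shapeLE_succ_le hM hBRC hk i⟩⟩
  · rw [card_shapeLE hM h₀, card_shapeLE hM h₁, partialSum_succ]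
  · exact rowLen_mono (shapeLE_mono hM (partialSum_mono A k.le_succ)) i

theorem mem_block_iff_mem_shapeLE (hM : IsSYT τ M) {k : ℕ} {c : ℕ × ℕ} (hc : c ∈ τ) :
    M c.1 c.2 ∈ Block A k ↔
      c ∈ shapeLE τ M (partialSum A (k + 1)) ∧ c ∉ shapeLE τ M (partialSum A k) := by
  simp only [mem_block_iff, mem_shapeLE hM, hc, true_and, not_le, and_comm]

theorem snd_eq_rowLen_shapeLE (hM : IsSYT τ M) (hBRC : BlockRowCond r A τ M) {k : ℕ}
    (hk : k < r) {c : ℕ × ℕ} (hc : c ∈ τ) (hv : M c.1 c.2 ∈ Block A k) :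
    c.2 = (shapeLE τ M (partialSum A k)).rowLen c.1 ∧
      (shapeLE τ M (partialSum A k)).rowLen c.1 <
        (shapeLE τ M (partialSum A (k + 1))).rowLen c.1 := by
  obtain ⟨h₁, h₂⟩ := (mem_block_iff_mem_shapeLE hM hc).1 hv
  rw [← c.eta, mem_iff_lt_rowLen] at h₁ h₂
  have := rowLen_shapeLE_succ_le hM hBRC hk c.1
  omega

/-- Inside a block the entries increase with the row, and each row carries at most one of
them, so an entry is determined by the rows, up to its own, that meet the block. -/
theorem eq_partialSum_add_card_grownRows (hM : IsSYT τ M) (hBRC : BlockRowCond r A τ M) {k : ℕ}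
    (hk : k < r) {i j : ℕ} (hc : (i, j) ∈ τ) (hv : M i j ∈ Block A k) :
    M i j = partialSum A k + (grownRows (shapeLE τ M (partialSum A k))
      (shapeLE τ M (partialSum A (k + 1))) (i + 1)).card := by
  set S := shapeLE τ M (partialSum A k)
  set S' := shapeLE τ M (partialSum A (k + 1))
  have hblock := mem_block_iff.1 hv
  have hV := hM.card_filter_mem_Ioc (u := partialSum A k) (Finset.mem_Icc.1 (hM.mem_Icc_card hc)).2
  dsimp only at hV
  suffices (τ.cells.filter fun c => M c.1 c.2 ∈ Ioc (partialSum A k) (M i j)).card =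
      (grownRows S S' (i + 1)).card by omega
  have inBlock : ∀ y ∈ τ.cells.filter fun c => M c.1 c.2 ∈ Ioc (partialSum A k) (M i j),
      y ∈ τ ∧ M y.1 y.2 ∈ Block A k ∧ M y.1 y.2 ≤ M i j := fun y hy => by
    simp only [mem_filter, mem_cells, mem_Ioc] at hy
    exact ⟨hy.1, mem_block_iff.2 ⟨hy.2.1, hy.2.2.trans hblock.2⟩, hy.2.2⟩
  refine card_bij (fun y _ => y.1) (fun y hy => ?_) (fun y₁ hy₁ y₂ hy₂ heq => ?_) fun i' hi' => ?_
  · obtain ⟨hyτ, hyb, hyle⟩ := inBlock y hy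
    refine mem_grownRows.2 ⟨Nat.lt_succ_of_le ?_, (snd_eq_rowLen_shapeLE hM hBRC hk hyτ hyb).2⟩
    rcases hyle.eq_or_lt with heq | hlt
    · exact (Prod.ext_iff.1 (hM.2.2.2.2 ((mem_cells _).2 hyτ) ((mem_cells (i, j)).2 hc) heq)).1.le
    · exact (hBRC.fst_lt hk hyτ hc hyb hv hlt).le
  · obtain ⟨hy₁τ, hy₁b, -⟩ := inBlock y₁ hy₁
    obtain ⟨hy₂τ, hy₂b, -⟩ := inBlock y₂ hy₂
    have h₁ := (snd_eq_rowLen_shapeLE hM hBRC hk hy₁τ hy₁b).1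
    have h₂ := (snd_eq_rowLen_shapeLE hM hBRC hk hy₂τ hy₂b).1
    exact Prod.ext heq (by rw [h₁, h₂, heq])
  · obtain ⟨hi'i, hgrow⟩ := mem_grownRows.1 hi'
    have hmem : (i', S.rowLen i') ∈ S' ∧ (i', S.rowLen i') ∉ S := by
      rw [mem_iff_lt_rowLen, mem_iff_lt_rowLen]
      exact ⟨hgrow, lt_irrefl _⟩
    have hyτ : (i', S.rowLen i') ∈ τ := ((mem_shapeLE hM).1 hmem.1).1
    have hyb := (mem_block_iff_mem_shapeLE hM hyτ).2 hmem
    refine ⟨(i', S.rowLen i'), mem_filter.2 ⟨(mem_cells _).2 hyτ,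
      mem_Ioc.2 ⟨(mem_block_iff.1 hyb).1, ?_⟩⟩, rfl⟩
    by_contra! hlt
    have := hBRC.fst_lt hk hc hyτ hv hyb hlt
    omega

end Tableaux

section FillStrips

def IsStripTower (r : ℕ) (A : ℕ → ℕ) (T : ℕ → YoungDiagram) : Prop :=
  T 0 = ⊥ ∧ ∀ k < r, StepSet (T (k + 1)) (A k) (T k)

variable {r : ℕ} {A : ℕ → ℕ} {T : ℕ → YoungDiagram}

theorem IsStripTower.le (hT : IsStripTower r A T) {j k : ℕ} (hjk : j ≤ k) (hk : k ≤ r) :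
    T j ≤ T k := by
  induction k, hjk using Nat.le_induction with
  | base => exact le_rfl
  | succ k _ ih => exact (ih (by omega)).trans (hT.2 k (by omega)).le

theorem IsStripTower.card (hT : IsStripTower r A T) {k : ℕ} (hk : k ≤ r) :
    (T k).card = partialSum A k := by
  induction k with
  | zero => rw [hT.1, card_bot, partialSum, sum_range_zero]
  | succ k ih =>
    have := (hT.2 k (by omega)).1
    rw [partialSum_succ, ← ih (by omega)]
    omega

variable (r T) in
/-- The strip `T (k + 1) / T k` containing the cell (`r` when the cell is not in `T r`). -/
noncomputable def stripIndex (c : ℕ × ℕ) : ℕ :=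
  Nat.find (⟨r, Or.inr le_rfl⟩ : ∃ k, c ∈ T (k + 1) ∨ r ≤ k)

theorem stripIndex_le_of_mem {c : ℕ × ℕ} {k : ℕ} (h : c ∈ T (k + 1)) : stripIndex r T c ≤ k :=
  Nat.find_min' _ (Or.inl h)

theorem stripIndex_spec (hT0 : T 0 = ⊥) {c : ℕ × ℕ} (hc : c ∈ T r) :
    stripIndex r T c < r ∧ c ∈ T (stripIndex r T c + 1) ∧ c ∉ T (stripIndex r T c) := by
  have hr : r ≠ 0 := by rintro rfl; rw [hT0] at hc; exact notMem_bot c hc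
  have hlt : stripIndex r T c < r :=
    (stripIndex_le_of_mem (k := r - 1)
      (by rwa [Nat.sub_add_cancel (Nat.pos_of_ne_zero hr)])).trans_lt (by omega)
  have hspec := Nat.find_spec (⟨r, Or.inr le_rfl⟩ : ∃ k, c ∈ T (k + 1) ∨ r ≤ k)
  refine ⟨hlt, hspec.resolve_right (by unfold stripIndex at hlt; omega), fun hmem => ?_⟩
  rcases Nat.eq_zero_or_pos (stripIndex r T c) with h0 | hpos
  · rw [h0, hT0] at hmem
    exact notMem_bot c hmem
  · have := stripIndex_le_of_mem (r := r) (k := stripIndex r T c - 1)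
      (by rwa [Nat.sub_add_cancel hpos])
    omega

variable (r T) in
/-- Fill each strip `T (k + 1) / T k` from top to bottom with the entries of the `k`-th block. -/
noncomputable def fillStrips (i j : ℕ) : ℕ :=
  if (i, j) ∈ T r then
    (T (stripIndex r T (i, j))).card +
      (grownRows (T (stripIndex r T (i, j))) (T (stripIndex r T (i, j) + 1)) (i + 1)).card
  else 0

theorem IsStripTower.snd_eq_rowLen_stripIndex (hT : IsStripTower r A T) {i j : ℕ}
    (hc : (i, j) ∈ T r) :
    j = (T (stripIndex r T (i, j))).rowLen i ∧
      (T (stripIndex r T (i, j))).rowLen i < (T (stripIndex r T (i, j) + 1)).rowLen i := by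
  obtain ⟨hlt, h₁, h₂⟩ := stripIndex_spec hT.1 hc
  rw [mem_iff_lt_rowLen] at h₁ h₂
  have := ((hT.2 _ hlt).2 i).2
  omega

theorem IsStripTower.fillStrips_mem_Ioc (hT : IsStripTower r A T) {i j : ℕ} (hc : (i, j) ∈ T r) :
    (T (stripIndex r T (i, j))).card < fillStrips r T i j ∧
      fillStrips r T i j ≤ (T (stripIndex r T (i, j) + 1)).card := by
  have hk := (stripIndex_spec hT.1 hc).1
  have hself : i ∈ grownRows (T (stripIndex r T (i, j))) (T (stripIndex r T (i, j) + 1)) (i + 1) :=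
    mem_grownRows.2 ⟨i.lt_succ_self, (hT.snd_eq_rowLen_stripIndex hc).2⟩
  have hle := card_grownRows_le (hT.2 _ hk) (i + 1)
  have hcard := (hT.2 _ hk).1
  rw [fillStrips, if_pos hc]
  exact ⟨by have := card_pos.2 ⟨i, hself⟩; omega, by omega⟩

theorem IsStripTower.fillStrips_mem_block (hT : IsStripTower r A T) {i j : ℕ} (hc : (i, j) ∈ T r) :
    fillStrips r T i j ∈ Block A (stripIndex r T (i, j)) := by
  have hk := (stripIndex_spec hT.1 hc).1
  rw [mem_block_iff, ← hT.card hk.le, ← hT.card hk]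
  exact hT.fillStrips_mem_Ioc hc

theorem IsStripTower.fillStrips_lt_of_stripIndex_lt (hT : IsStripTower r A T) {i₁ j₁ i₂ j₂ : ℕ}
    (hc₁ : (i₁, j₁) ∈ T r) (hc₂ : (i₂, j₂) ∈ T r)
    (h : stripIndex r T (i₁, j₁) < stripIndex r T (i₂, j₂)) :
    fillStrips r T i₁ j₁ < fillStrips r T i₂ j₂ :=
  calc fillStrips r T i₁ j₁
    _ ≤ (T (stripIndex r T (i₁, j₁) + 1)).card := (hT.fillStrips_mem_Ioc hc₁).2
    _ ≤ (T (stripIndex r T (i₂, j₂))).card :=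
      card_le_of_le (hT.le h (stripIndex_spec hT.1 hc₂).1.le)
    _ < fillStrips r T i₂ j₂ := (hT.fillStrips_mem_Ioc hc₂).1

theorem IsStripTower.fillStrips_lt_of_fst_lt (hT : IsStripTower r A T) {i₁ j₁ i₂ j₂ : ℕ}
    (hc₁ : (i₁, j₁) ∈ T r) (hc₂ : (i₂, j₂) ∈ T r)
    (heq : stripIndex r T (i₁, j₁) = stripIndex r T (i₂, j₂)) (h : i₁ < i₂) :
    fillStrips r T i₁ j₁ < fillStrips r T i₂ j₂ := by
  set k := stripIndex r T (i₂, j₂)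
  have hsub : grownRows (T k) (T (k + 1)) (i₁ + 1) ⊂ grownRows (T k) (T (k + 1)) (i₂ + 1) :=
    ssubset_of_subset_of_ne (grownRows_mono _ _ (by omega)) fun hEq => by
      have := hEq ▸ mem_grownRows.2 ⟨i₂.lt_succ_self, (hT.snd_eq_rowLen_stripIndex hc₂).2⟩
      have := (mem_grownRows.1 this).1
      omega
  rw [fillStrips, if_pos hc₁, fillStrips, if_pos hc₂, heq]
  exact Nat.add_lt_add_left (card_lt_card hsub) _

theorem IsStripTower.eq_of_stripIndex_eq (hT : IsStripTower r A T) {i j₁ j₂ : ℕ}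
    (hc₁ : (i, j₁) ∈ T r) (hc₂ : (i, j₂) ∈ T r)
    (heq : stripIndex r T (i, j₁) = stripIndex r T (i, j₂)) : j₁ = j₂ := by
  rw [(hT.snd_eq_rowLen_stripIndex hc₁).1, (hT.snd_eq_rowLen_stripIndex hc₂).1, heq]

theorem IsStripTower.stripIndex_le_of_le (hT : IsStripTower r A T) {i₁ j₁ i₂ j₂ : ℕ}
    (hi : i₁ ≤ i₂) (hj : j₁ ≤ j₂) (hc₂ : (i₂, j₂) ∈ T r) :
    stripIndex r T (i₁, j₁) ≤ stripIndex r T (i₂, j₂) :=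
  stripIndex_le_of_mem ((T _).up_left_mem hi hj (stripIndex_spec hT.1 hc₂).2.1)

theorem IsStripTower.fillStrips_lt (hT : IsStripTower r A T) {i₁ j₁ i₂ j₂ : ℕ}
    (hi : i₁ ≤ i₂) (hj : j₁ ≤ j₂) (hne : (i₁, j₁) ≠ (i₂, j₂)) (hc₂ : (i₂, j₂) ∈ T r) :
    fillStrips r T i₁ j₁ < fillStrips r T i₂ j₂ := by
  have hc₁ : (i₁, j₁) ∈ T r := (T r).up_left_mem hi hj hc₂
  rcases (hT.stripIndex_le_of_le hi hj hc₂).eq_or_lt with heq | hlt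
  · rcases hi.eq_or_lt with rfl | hlt
    · exact absurd (by rw [hT.eq_of_stripIndex_eq hc₁ hc₂ heq]) hne
    · exact hT.fillStrips_lt_of_fst_lt hc₁ hc₂ heq hlt
  · exact hT.fillStrips_lt_of_stripIndex_lt hc₁ hc₂ hlt

theorem IsStripTower.isSYT_fillStrips (hT : IsStripTower r A T) :
    IsSYT (T r) (fillStrips r T) := by
  have hinj : Set.InjOn (fun c : ℕ × ℕ => fillStrips r T c.1 c.2) ↑(T r).cells := by
    rintro ⟨i₁, j₁⟩ hc₁ ⟨i₂, j₂⟩ hc₂ heq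
    simp only [mem_coe, mem_cells] at hc₁ hc₂ heq
    rcases lt_trichotomy (stripIndex r T (i₁, j₁)) (stripIndex r T (i₂, j₂)) with hk | hk | hk
    · exact absurd heq (hT.fillStrips_lt_of_stripIndex_lt hc₁ hc₂ hk).ne
    · rcases lt_trichotomy i₁ i₂ with hi | rfl | hi
      · exact absurd heq (hT.fillStrips_lt_of_fst_lt hc₁ hc₂ hk hi).ne
      · rw [hT.eq_of_stripIndex_eq hc₁ hc₂ hk]
      · exact absurd heq (hT.fillStrips_lt_of_fst_lt hc₂ hc₁ hk.symm hi).ne'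
    · exact absurd heq (hT.fillStrips_lt_of_stripIndex_lt hc₂ hc₁ hk).ne'
  refine ⟨fun i j₁ j₂ hlt hc => hT.fillStrips_lt le_rfl hlt.le (by simp [hlt.ne]) hc,
    fun i₁ i₂ j hlt hc => hT.fillStrips_lt hlt.le le_rfl (by simp [hlt.ne]) hc,
    fun i j hc => if_neg hc, ?_, hinj⟩
  refine eq_of_subset_of_card_le (fun v hv => ?_) ?_
  · obtain ⟨⟨i, j⟩, hc, rfl⟩ := mem_image.1 hv
    have := hT.fillStrips_mem_Ioc ((mem_cells _).1 hc)
    have := card_le_of_le (hT.le (j := stripIndex r T (i, j) + 1)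
      (stripIndex_spec hT.1 ((mem_cells _).1 hc)).1 le_rfl)
    simp only [Finset.mem_Icc]
    omega
  · rw [card_image_of_injOn hinj, Nat.card_Icc, YoungDiagram.card]
    omega

theorem eq_of_mem_block_of_mem_block {v j k : ℕ} (hj : v ∈ Block A j) (hk : v ∈ Block A k) :
    j = k := by
  rw [mem_block_iff] at hj hk
  by_contra hne
  rcases Nat.lt_or_gt_of_ne hne with h | h
  · have := partialSum_mono A (show j + 1 ≤ k from h); omega
  · have := partialSum_mono A (show k + 1 ≤ j from h); omega

theorem IsStripTower.blockRowCond_fillStrips (hT : IsStripTower r A T) :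
    BlockRowCond r A (T r) (fillStrips r T) := by
  rintro k - _ hm₁ _ hm₂ hlt ⟨i₁, j₁⟩ hc₁ ⟨i₂, j₂⟩ hc₂ rfl rfl
  simp only [mem_cells] at hc₁ hc₂ ⊢
  have hk : stripIndex r T (i₁, j₁) = stripIndex r T (i₂, j₂) :=
    (eq_of_mem_block_of_mem_block (hT.fillStrips_mem_block hc₁) hm₁).trans
      (eq_of_mem_block_of_mem_block hm₂ (hT.fillStrips_mem_block hc₂))
  rcases lt_trichotomy i₁ i₂ with hi | rfl | hi
  · exact hi
  · rw [hT.eq_of_stripIndex_eq hc₁ hc₂ hk] at hlt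
    exact absurd hlt (lt_irrefl _)
  · exact absurd hlt (hT.fillStrips_lt_of_fst_lt hc₂ hc₁ hk.symm hi).not_gt

theorem IsStripTower.shapeLE_fillStrips (hT : IsStripTower r A T) {j : ℕ} (hj : j ≤ r) :
    shapeLE (T r) (fillStrips r T) (partialSum A j) = T j := by
  ext ⟨a, b⟩
  rw [mem_cells, mem_cells, mem_shapeLE hT.isSYT_fillStrips]
  constructor
  · rintro ⟨hc, hle⟩
    obtain ⟨hk, hmem, -⟩ := stripIndex_spec hT.1 hc
    by_contra hcj
    have hjk : j ≤ stripIndex r T (a, b) := by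
      by_contra! h
      exact hcj (hT.le h hj hmem)
    have := mem_block_iff.1 (hT.fillStrips_mem_block hc)
    have := partialSum_mono A hjk
    dsimp only at hle
    omega
  · intro hc
    have hcr : (a, b) ∈ T r := hT.le hj le_rfl hc
    have hpos : 0 < j := Nat.pos_of_ne_zero fun h => by
      rw [h, hT.1] at hc
      exact notMem_bot _ hc
    have hk : stripIndex r T (a, b) ≤ j - 1 :=
      stripIndex_le_of_mem (by rwa [Nat.sub_add_cancel hpos])
    have := (mem_block_iff.1 (hT.fillStrips_mem_block hcr)).2
    have := partialSum_mono A (show stripIndex r T (a, b) + 1 ≤ j by omega)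
    exact ⟨hcr, by dsimp only; omega⟩

theorem isStripTower_shapeLE {τ : YoungDiagram} {M : ℕ → ℕ → ℕ} (hM : IsSYT τ M)
    (hBRC : BlockRowCond r A τ M) (hsum : partialSum A r = τ.card) :
    IsStripTower r A fun k => shapeLE τ M (partialSum A k) :=
  ⟨shapeLE_zero hM, fun _ hk => stepSet_shapeLE hM hBRC hsum hk⟩

theorem fillStrips_shapeLE {τ : YoungDiagram} {M : ℕ → ℕ → ℕ} (hM : IsSYT τ M)
    (hBRC : BlockRowCond r A τ M) (hsum : partialSum A r = τ.card) :
    fillStrips r (fun k => shapeLE τ M (partialSum A k)) = M := by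
  have hT := isStripTower_shapeLE hM hBRC hsum
  have hτ : shapeLE τ M (partialSum A r) = τ := shapeLE_of_card_le hM hsum.ge
  funext i j
  by_cases hc : (i, j) ∈ τ
  · have hcr : (i, j) ∈ shapeLE τ M (partialSum A r) := by rwa [hτ]
    obtain ⟨hk, h₁, h₂⟩ := stripIndex_spec (r := r) (T := fun k => shapeLE τ M (partialSum A k))
      hT.1 hcr
    set k := stripIndex r (fun k => shapeLE τ M (partialSum A k)) (i, j)
    have hv : M i j ∈ Block A k := (mem_block_iff_mem_shapeLE hM hc).2 ⟨h₁, h₂⟩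
    rw [fillStrips, if_pos hcr, card_shapeLE hM (hsum ▸ partialSum_mono A hk.le),
      ← eq_partialSum_add_card_grownRows hM hBRC hk hc hv]
  · rw [fillStrips, if_neg (by rwa [hτ]), hM.2.2.1 i j hc]

end FillStrips

theorem List.reverse_map_range (A : ℕ → ℕ) (r : ℕ) :
    ((List.range r).map A).reverse = (List.range r).map fun k => A (r - 1 - k) :=
  List.ext_getElem (by simp) fun k _ _ => by
    simp only [List.getElem_reverse, List.getElem_map, List.getElem_range, List.length_map,
      List.length_range]

theorem ncard_isSYT_blockRowCond_eq_ncard_isStripChain {r : ℕ} {A : ℕ → ℕ} {τ : YoungDiagram}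
    (hsum : partialSum A r = τ.card) :
    {M | IsSYT τ M ∧ BlockRowCond r A τ M}.ncard =
      {S | IsStripChain ((List.range r).map fun k => A (r - 1 - k)) τ S}.ncard := by
  let shapes (M : ℕ → ℕ → ℕ) : List YoungDiagram :=
    (List.range r).map fun k => shapeLE τ M (partialSum A (r - (k + 1)))
  refine Set.ncard_congr (fun M _ => shapes M) (fun M ⟨hM, hBRC⟩ => ?_)
    (fun M₁ M₂ ⟨hM₁, hBRC₁⟩ ⟨hM₂, hBRC₂⟩ heq => ?_) fun S hS => ?_
  · have hT := isStripTower_shapeLE hM hBRC hsum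
    have key := (isStripChain_map_range_iff r (fun k => A (r - 1 - k))
      fun k => shapeLE τ M (partialSum A (r - k))).2 ⟨fun k hk => ?_, ?_⟩
    · show IsStripChain _ τ (shapes M)
      simpa only [Nat.sub_zero, shapeLE_of_card_le hM hsum.ge] using key
    · rw [show r - k = r - 1 - k + 1 by omega, show r - (k + 1) = r - 1 - k by omega]
      exact hT.2 _ (by omega)
    · simpa only [Nat.sub_self] using hT.1
  · have hshape : (fun k => shapeLE τ M₁ (partialSum A k)) =
        fun k => shapeLE τ M₂ (partialSum A k) := by
      funext j
      rcases lt_or_ge j r with hj | hj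
      · have := congrArg (·[r - 1 - j]?) heq
        simp only [shapes, List.getElem?_map, List.getElem?_range (by omega : r - 1 - j < r),
          Option.map_some, Option.some.injEq] at this
        rwa [show r - (r - 1 - j + 1) = j by omega] at this
      · rw [shapeLE_of_card_le hM₁ (hsum ▸ partialSum_mono A hj),
          shapeLE_of_card_le hM₂ (hsum ▸ partialSum_mono A hj)]
    rw [← fillStrips_shapeLE hM₁ hBRC₁ hsum, hshape, fillStrips_shapeLE hM₂ hBRC₂ hsum]
  · have hlen : S.length = r := by simpa using hS.length_eq
    obtain ⟨hsteps, hbot⟩ := (isStripChain_iff_getD hlen).1 hS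
    let T (j : ℕ) : YoungDiagram := (τ :: S).getD (r - j) ⊥
    have hT : IsStripTower r A T := by
      refine ⟨by simpa [T] using hbot, fun j hj => ?_⟩
      have := hsteps (r - 1 - j) (by omega)
      rw [show r - 1 - (r - 1 - j) = j by omega] at this
      simpa only [T, show r - (j + 1) = r - 1 - j by omega, show r - j = r - 1 - j + 1 by omega,
        List.getD_cons_succ] using this
    have hTr : T r = τ := by simp [T]
    refine ⟨fillStrips r T, ⟨hTr ▸ hT.isSYT_fillStrips, hTr ▸ hT.blockRowCond_fillStrips⟩, ?_⟩
    conv_rhs => rw [← List.map_range_getD S ⊥, hlen]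
    refine List.map_congr_left fun k hk => ?_
    rw [List.mem_range] at hk
    have := hT.shapeLE_fillStrips (j := r - (k + 1)) (by omega)
    rw [hTr] at this
    simp only [this, T, show r - (r - (k + 1)) = k + 1 by omega, List.getD_cons_succ]

def seqFrom {n : ℕ} (τ : YoungDiagram) (P : Fin n → YoungDiagram) : ℕ → YoungDiagram
  | 0 => τ
  | k + 1 => if h : k < n then P ⟨k, h⟩ else ⊥

theorem ncard_stepSeq_eq_ncard_isStripChain {r : ℕ} (hr : 2 ≤ r) (A : ℕ → ℕ) (τ : YoungDiagram) :
    {P : Fin (r - 1) → YoungDiagram |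
        (∀ i : Fin (r - 1), (i : ℕ) = 0 → StepSet τ (A 0) (P i)) ∧
        (∀ i i' : Fin (r - 1), (i' : ℕ) = (i : ℕ) + 1 →
          StepSet (P i) (A (i' : ℕ)) (P i')) ∧
        (∀ i : Fin (r - 1), (i : ℕ) = r - 2 → IsColumn (A (r - 1)) (P i))}.ncard =
      {S | IsStripChain ((List.range r).map A) τ S}.ncard := by
  refine Set.ncard_congr (fun P _ => (List.range r).map fun k => seqFrom τ P (k + 1))
    (fun P ⟨h₀, hsucc, hlast⟩ => ?_) (fun P₁ P₂ _ _ heq => ?_) fun S hS => ?_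
  · refine (isStripChain_map_range_iff r A (seqFrom τ P)).2 ⟨fun k hk => ?_, ?_⟩
    · rcases k with _ | k
      · simpa [seqFrom, show 0 < r - 1 by omega] using h₀ ⟨0, by omega⟩ rfl
      · rcases lt_or_ge (k + 1) (r - 1) with hk' | hk'
        · simpa [seqFrom, hk', show k < r - 1 by omega] using hsucc ⟨k, by omega⟩ ⟨k + 1, hk'⟩ rfl
        · rw [seqFrom, seqFrom, dif_pos (by omega), dif_neg (by omega), stepSet_bot_iff_isColumn,
            show k + 1 = r - 1 by omega]
          exact hlast ⟨k, by omega⟩ (by simp only; omega)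
    · obtain ⟨n, rfl⟩ : ∃ n, r = n + 1 := ⟨r - 1, by omega⟩
      simp [seqFrom]
  · funext i
    have := congrArg (·[(i : ℕ)]?) heq
    simpa [seqFrom, i.isLt, show (i : ℕ) < r by omega] using this
  · have hlen : S.length = r := by simpa using hS.length_eq
    obtain ⟨hsteps, hbot⟩ := (isStripChain_iff_getD hlen).1 hS
    have hbot' : S.getD (r - 1) ⊥ = ⊥ := by
      rwa [show r = r - 1 + 1 by omega, List.getD_cons_succ] at hbot
    refine ⟨fun i => S.getD i ⊥, ⟨fun i hi => ?_, fun i i' hi => ?_, fun i hi => ?_⟩, ?_⟩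
    · simpa [hi] using hsteps 0 (by omega)
    · simpa [hi] using hsteps (i + 1) (by omega)
    · have := hsteps (r - 1) (by omega)
      rw [hbot', stepSet_bot_iff_isColumn, show r - 1 = r - 2 + 1 by omega,
        List.getD_cons_succ, ← hi] at this
      convert this using 2
      omega
    · conv_rhs => rw [← List.map_range_getD S ⊥, hlen]
      refine List.map_congr_left fun k hk => ?_
      rw [List.mem_range] at hk
      rcases lt_or_ge k (r - 1) with hk' | hk'
      · simp [seqFrom, hk']
      · rw [seqFrom, dif_neg (by omega), show k = r - 1 by omega, hbot']

/-- Sequences are 0-indexed: `P i` for `i : Fin (r-1)` is the paper's `P_{i+1}`. -/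
theorem card_seq_eq_card_SYT_general (ℓ r : ℕ) (A : ℕ → ℕ) (hr : 2 ≤ r)
    (hAsum : ∑ i ∈ Finset.range r, A i = ℓ)
    (τ : YoungDiagram) (hτ : τ.card = ℓ) :
    {P : Fin (r - 1) → YoungDiagram |
        (∀ i : Fin (r - 1), (i : ℕ) = 0 → StepSet τ (A 0) (P i)) ∧
        (∀ i i' : Fin (r - 1), (i' : ℕ) = (i : ℕ) + 1 →
          StepSet (P i) (A (i' : ℕ)) (P i')) ∧
        (∀ i : Fin (r - 1), (i : ℕ) = r - 2 → IsColumn (A (r - 1)) (P i))}.ncard =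
      {M : ℕ → ℕ → ℕ | IsSYT τ M ∧ BlockRowCond r A τ M}.ncard := by
  rw [ncard_stepSeq_eq_ncard_isStripChain hr A τ,
    ncard_isStripChain_perm (List.reverse_perm _).symm τ, List.reverse_map_range,
    ncard_isSYT_blockRowCond_eq_ncard_isStripChain (hAsum.trans hτ.symm)]

/-- For any partition `τ` of `ℓ`, the number of sequences
`(P₁, …, P_{r-1})` with `P₁ ∈ S^τ_{a₁}`, `Pᵢ ∈ S^{P_{i-1}}_{aᵢ}` and
`P_{r-1} = (1,…,1) ⊢ a_r` equals the number of standard Young tableaux `M` of shape `τ`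
in which the entries of each block `U_j` occur in strictly increasing rows.
(Sequences are 0-indexed: `P i` for `i : Fin (r-1)` is the paper's `P_{i+1}`.) -/
theorem card_seq_eq_card_SYT (ℓ r : ℕ) (A : ℕ → ℕ) (hr : 2 ≤ r)
    (hAanti : ∀ i j, i ≤ j → j < r → A j ≤ A i)
    (hApos : ∀ i, i < r → 1 ≤ A i)
    (hAsum : ∑ i ∈ Finset.range r, A i = ℓ)
    (τ : YoungDiagram) (hτ : τ.card = ℓ) :
    {P : Fin (r - 1) → YoungDiagram |
        (∀ i : Fin (r - 1), (i : ℕ) = 0 → StepSet τ (A 0) (P i)) ∧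
        (∀ i i' : Fin (r - 1), (i' : ℕ) = (i : ℕ) + 1 →
          StepSet (P i) (A (i' : ℕ)) (P i')) ∧
        (∀ i : Fin (r - 1), (i : ℕ) = r - 2 → IsColumn (A (r - 1)) (P i))}.ncard =
      {M : ℕ → ℕ → ℕ | IsSYT τ M ∧ BlockRowCond r A τ M}.ncard :=
  card_seq_eq_card_SYT_general ℓ r A hr hAsum τ hτ
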